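/- In a fuzzy cycle, the weight of any β-strong edge is less than or equal to the weight of any α-strong edge; in particular it does not exceed the minimum weight among α-strong edges. -/

import Mathlib

open Finset

/-- A fuzzy graph on vertex type `V`. -/
structure FuzzyGraph (V : Type*) where
  ρ : V → ℝ
  υ : V → V → ℝ
  ρ_nonneg : ∀ a, 0 ≤ ρ a
  ρ_le_one : ∀ a, ρ a ≤ 1
  υ_nonneg : ∀ a b, 0 ≤ υ a b
  symm : ∀ a b, υ a b = υ b a
  υ_le : ∀ a b, υ a b ≤ min (ρ a) (ρ b)
  loopless : ∀ a, υ a a = 0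

namespace FuzzyGraph

variable {V : Type*} [Fintype V] [DecidableEq V]

/-- Strength of a path given by its list of successive vertices:
the minimum of the weights of its edges. -/
def pathStrength (X : FuzzyGraph V) : List V → ℝ
  | [] => 0
  | [_] => 0
  | [a, b] => X.υ a b
  | a :: b :: c :: l => min (X.υ a b) (X.pathStrength (b :: c :: l))

/-- `l` is a path from `a` to `b` : distinct vertices joined by positive-weight edges. -/
def IsPath (X : FuzzyGraph V) (a b : V) (l : List V) : Prop :=
  l.Nodup ∧ l.head? = some a ∧ l.getLast? = some b ∧ 2 ≤ l.length ∧
    l.Chain' (fun x y => 0 < X.υ x y)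

/-- Strength of connectedness between two vertices: maximum strength of a path. -/
noncomputable def conn (X : FuzzyGraph V) (a b : V) : ℝ :=
  sSup {s | ∃ l : List V, X.IsPath a b l ∧ s = X.pathStrength l}

/-- Delete the edge `ab` (set its weight to `0`). -/
def deleteEdge (X : FuzzyGraph V) (a b : V) : FuzzyGraph V where
  ρ := X.ρ
  υ x y := if (x = a ∧ y = b) ∨ (x = b ∧ y = a) then 0 else X.υ x y
  ρ_nonneg := X.ρ_nonneg
  ρ_le_one := X.ρ_le_one
  υ_nonneg := by
    intro x y; try dsimp only
    split_ifs
    · exact le_rfl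
    · exact X.υ_nonneg x y
  symm := by
    intro x y; try dsimp only
    by_cases h : (x = a ∧ y = b) ∨ (x = b ∧ y = a)
    · rw [if_pos h, if_pos (by tauto)]
    · rw [if_neg h, if_neg (by tauto), X.symm]
  υ_le := by
    intro x y; try dsimp only
    split_ifs
    · exact le_min (X.ρ_nonneg x) (X.ρ_nonneg y)
    · exact X.υ_le x y
  loopless := by
    intro x; try dsimp only
    split_ifs
    · rfl
    · exact X.loopless x

/-- `ab` is a strong edge (α- or β-strong). -/
def StrongEdge (X : FuzzyGraph V) (a b : V) : Prop :=
  0 < X.υ a b ∧ (X.deleteEdge a b).conn a b ≤ X.υ a b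

/-- `ab` is an α-strong edge. -/
def AlphaStrong (X : FuzzyGraph V) (a b : V) : Prop :=
  0 < X.υ a b ∧ (X.deleteEdge a b).conn a b < X.υ a b

/-- `ab` is a β-strong edge. -/
def BetaStrong (X : FuzzyGraph V) (a b : V) : Prop :=
  0 < X.υ a b ∧ X.υ a b = (X.deleteEdge a b).conn a b

/-- `ab` is a δ-edge. -/
def DeltaEdge (X : FuzzyGraph V) (a b : V) : Prop :=
  0 < X.υ a b ∧ X.υ a b < (X.deleteEdge a b).conn a b

/-- The minimum weight of a strong edge incident at `a`. -/
noncomputable def minInc (X : FuzzyGraph V) (a : V) : ℝ :=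
  sInf {w | ∃ b, X.StrongEdge a b ∧ w = X.υ a b}

/-- The weight of a set of vertices. -/
noncomputable def weight (X : FuzzyGraph V) (S : Finset V) : ℝ :=
  ∑ a ∈ S, X.minInc a

/-- `D` is a strong dominating set. -/
def IsSDS (X : FuzzyGraph V) (D : Finset V) : Prop :=
  ∀ v, v ∉ D → ∃ a ∈ D, X.StrongEdge a v

/-- `D` is a minimal strong dominating set. -/
def IsMinimalSDS (X : FuzzyGraph V) (D : Finset V) : Prop :=
  X.IsSDS D ∧ ∀ a ∈ D, ¬ X.IsSDS (D.erase a)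

/-- `D` is a minimum (least weight) strong dominating set. -/
def IsMinimumSDS (X : FuzzyGraph V) (D : Finset V) : Prop :=
  X.IsSDS D ∧ ∀ D' : Finset V, X.IsSDS D' → X.weight D ≤ X.weight D'

/-- The strong domination degree of a vertex. -/
noncomputable def sd (X : FuzzyGraph V) (u : V) : ℝ :=
  sInf {w | ∃ D : Finset V, X.IsMinimalSDS D ∧ u ∈ D ∧ w = X.weight D}

/-- The strong domination number. -/
noncomputable def gammaS (X : FuzzyGraph V) : ℝ :=
  sInf {w | ∃ D : Finset V, X.IsSDS D ∧ w = X.weight D}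

/-- The upper strong domination number. -/
noncomputable def GammaS (X : FuzzyGraph V) : ℝ :=
  sSup {w | ∃ D : Finset V, X.IsMinimalSDS D ∧ w = X.weight D}

/-- The strong domination index. -/
noncomputable def SDI (X : FuzzyGraph V) : ℝ := ∑ u : V, X.sd u

/-- `X` is connected. -/
def Connected (X : FuzzyGraph V) : Prop := ∀ a b : V, a ≠ b → ∃ l, X.IsPath a b l

/-- `X` is a strong fuzzy graph: every edge is strong. -/
def IsStrongFG (X : FuzzyGraph V) : Prop := ∀ a b, 0 < X.υ a b → X.StrongEdge a b

/-- Underlying (support) simple graph. -/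
def support (X : FuzzyGraph V) : SimpleGraph V where
  Adj a b := 0 < X.υ a b
  symm := ⟨by intro a b h; change 0 < X.υ a b at h; show 0 < X.υ b a; rw [X.symm]; exact h⟩
  loopless := ⟨by intro a h; change 0 < X.υ a a at h; rw [X.loopless] at h; exact lt_irrefl 0 h⟩

/-- `X` is a fuzzy tree. -/
def IsFuzzyTree (X : FuzzyGraph V) : Prop :=
  ∃ F : FuzzyGraph V, F.ρ = X.ρ ∧ (∀ a b, F.υ a b = X.υ a b ∨ F.υ a b = 0) ∧
    F.support.IsTree ∧ ∀ a b, 0 < X.υ a b → F.υ a b = 0 → X.υ a b < F.conn a b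

/-- The size of a fuzzy graph: the sum of all edge weights. -/
noncomputable def size (X : FuzzyGraph V) : ℝ := (∑ a : V, ∑ b : V, X.υ a b) / 2

/-- The underlying graph of `X` is a cycle. -/
def IsCycleGraph (X : FuzzyGraph V) : Prop :=
  ∃ n : ℕ, 3 ≤ n ∧ ∃ f : ZMod n ≃ V,
    ∀ x y : V, 0 < X.υ x y ↔ ∃ i : ZMod n, (x = f i ∧ y = f (i + 1)) ∨ (x = f (i + 1) ∧ y = f i)

/-- `X` is a fuzzy cycle: a cycle with at least two edges of minimum weight. -/
def IsFuzzyCycle (X : FuzzyGraph V) : Prop :=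
  X.IsCycleGraph ∧ ∃ a b c d : V, 0 < X.υ a b ∧ 0 < X.υ c d ∧
    Sym2.mk (a, b) ≠ Sym2.mk (c, d) ∧ X.υ a b = X.υ c d ∧
    ∀ x y, 0 < X.υ x y → X.υ a b ≤ X.υ x y

/-- A set of pairwise fuzzy independent vertices. -/
def IsFuzzyIndep (X : FuzzyGraph V) (S : Finset V) : Prop :=
  ∀ a ∈ S, ∀ b ∈ S, a ≠ b → ¬ X.StrongEdge a b

/-- The strong independent domination number. -/
noncomputable def iS (X : FuzzyGraph V) : ℝ :=
  sInf {w | ∃ D : Finset V, X.IsSDS D ∧ X.IsFuzzyIndep D ∧ w = X.weight D}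

/-- The strong independence number. -/
noncomputable def betaS (X : FuzzyGraph V) : ℝ :=
  sSup {w | ∃ S : Finset V, X.IsFuzzyIndep S ∧ w = X.weight S}

/-- Closed strong neighborhood. -/
def closedNbhd (X : FuzzyGraph V) (a : V) : Set V := insert a {b | X.StrongEdge a b}

/-- Open strong neighborhood. -/
def openNbhd (X : FuzzyGraph V) (a : V) : Set V := {b | X.StrongEdge a b}

/-- Private neighborhood of `a` with respect to `S`. -/
def privNbhd (X : FuzzyGraph V) (a : V) (S : Finset V) : Set V :=
  X.closedNbhd a \ ⋃ b ∈ S.erase a, X.closedNbhd b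

/-- `S` is a fuzzy irredundant set. -/
def IsIrredundant (X : FuzzyGraph V) (S : Finset V) : Prop :=
  ∀ a ∈ S, (X.privNbhd a S).Nonempty

/-- `S` is a maximal fuzzy irredundant set. -/
def IsMaximalIrredundant (X : FuzzyGraph V) (S : Finset V) : Prop :=
  X.IsIrredundant S ∧ ∀ v ∉ S, ¬ X.IsIrredundant (insert v S)

/-- The strong irredundance number. -/
noncomputable def irS (X : FuzzyGraph V) : ℝ :=
  sInf {w | ∃ S : Finset V, X.IsMaximalIrredundant S ∧ w = X.weight S}

end FuzzyGraph

/-!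
Deleting the edge `ab` from a cycle leaves a single path from `a` to `b`, running through every
other edge; so every `a`–`b` path of `X - ab` uses the edge `cd`, whence `c(a,b) ≤ υ(cd)`, and
for a β-strong edge `υ(ab) = c(a,b)`. Formally, `{ab, cd}` is an edge cut: the arc of the cycle
from `b` up to the near end of `cd` contains `b` but not `a`, and only `ab` and `cd` leave it.
-/

namespace ZMod

variable {n : ℕ}

theorem add_one_eq_zero_or_val_add_one [NeZero n] (z : ZMod n) :
    z + 1 = 0 ∨ (z + 1).val = z.val + 1 := by
  obtain ⟨m, rfl⟩ := Nat.exists_eq_add_one_of_ne_zero (NeZero.ne n)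
  have := Fin.val_add_one z
  split_ifs at this with h
  · exact Or.inl (Fin.ext this)
  · exact Or.inr this

/-- The arc `t, t + 1, …, j` of the cyclic order on `ZMod n`. -/
def arc (t j : ZMod n) : Set (ZMod n) := {x | (x - t).val ≤ (j - t).val}

theorem left_mem_arc (t j : ZMod n) : t ∈ arc t j := by
  simp [arc]

theorem notMem_arc_of_ne [NeZero n] {s j : ZMod n} (h : j ≠ s) : s ∉ arc (s + 1) j := by
  obtain ⟨m, rfl⟩ := Nat.exists_eq_add_one_of_ne_zero (NeZero.ne n)
  have hj : j - (s + 1) + 1 ≠ 0 := fun h' => h (by linear_combination h')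
  have hlt := (j - (s + 1) + 1).val_lt
  simp only [arc, Set.mem_ofPred_eq, sub_add_cancel_left, val_neg_one, not_le]
  rcases (j - (s + 1)).add_one_eq_zero_or_val_add_one with h' | h'
  exacts [absurd h' hj, by omega]

theorem eq_or_eq_of_mem_arc_iff [NeZero n] {s j x : ZMod n}
    (h : x ∈ arc (s + 1) j ↔ x + 1 ∉ arc (s + 1) j) : x = s ∨ x = j := by
  simp only [arc, Set.mem_ofPred_eq, show x + 1 - (s + 1) = x - (s + 1) + 1 by ring] at h
  rcases (x - (s + 1)).add_one_eq_zero_or_val_add_one with h' | h'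
  · exact Or.inl (by linear_combination h')
  · rw [h'] at h
    have : (x - (s + 1)).val = (j - (s + 1)).val := by omega
    exact Or.inr (sub_left_injective (val_injective _ this))

end ZMod

namespace FuzzyGraph

variable {V : Type*}

theorem υ_eq_of_mk_eq (X : FuzzyGraph V) {a b c d : V} (h : s(a, b) = s(c, d)) :
    X.υ a b = X.υ c d := by
  rcases Sym2.eq_iff.mp h with ⟨rfl, rfl⟩ | ⟨rfl, rfl⟩
  exacts [rfl, X.symm a b]

theorem pathStrength_cons_cons_le (Y : FuzzyGraph V) (x y : V) (t : List V) :
    Y.pathStrength (x :: y :: t) ≤ Y.υ x y := by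
  cases t
  exacts [le_rfl, min_le_left _ _]

theorem pathStrength_le_of_crossing (Y : FuzzyGraph V) (S : Set V) {w : ℝ}
    (hw : ∀ x y, (x ∈ S ↔ y ∉ S) → Y.υ x y ≤ w) :
    ∀ {a b : V} {l : List V}, l.head? = some a → l.getLast? = some b → (a ∈ S ↔ b ∉ S) →
      Y.pathStrength l ≤ w
  | _, _, [], hh, _, _ => by simp at hh
  | _, _, [x], hh, hl, hab => by
    obtain rfl : x = _ := by simpa using hh
    obtain rfl : x = _ := by simpa using hl
    tauto
  | _, b, x :: y :: t, hh, hl, hab => by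
    obtain rfl : x = _ := by simpa using hh
    by_cases hxy : x ∈ S ↔ y ∉ S
    · exact (Y.pathStrength_cons_cons_le x y t).trans (hw x y hxy)
    cases t with
    | nil =>
      obtain rfl : y = b := by simpa using hl
      exact absurd hab hxy
    | cons z t =>
      have hl' : (y :: z :: t).getLast? = some b := by simpa using hl
      exact (min_le_right _ _).trans (pathStrength_le_of_crossing Y S hw rfl hl' (by tauto))

theorem conn_le_of_crossing (Y : FuzzyGraph V) (S : Set V) {a b : V} {w : ℝ}
    (hab : a ∈ S ↔ b ∉ S) (hw₀ : 0 ≤ w) (hw : ∀ x y, (x ∈ S ↔ y ∉ S) → Y.υ x y ≤ w) :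
    Y.conn a b ≤ w := by
  refine Real.sSup_le ?_ hw₀
  rintro _ ⟨l, ⟨-, hh, hl, -⟩, rfl⟩
  exact Y.pathStrength_le_of_crossing S hw hh hl hab

theorem IsCycleGraph.exists_cut {X : FuzzyGraph V} (hX : X.IsCycleGraph) {a b c d : V}
    (hab : 0 < X.υ a b) (hcd : 0 < X.υ c d) (hne : s(a, b) ≠ s(c, d)) :
    ∃ S : Set V, (a ∈ S ↔ b ∉ S) ∧
      ∀ x y, 0 < X.υ x y → (x ∈ S ↔ y ∉ S) → s(x, y) = s(a, b) ∨ s(x, y) = s(c, d) := by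
  obtain ⟨n, hn, f, hf⟩ := hX
  have : NeZero n := ⟨by omega⟩
  have edge : ∀ x y, 0 < X.υ x y → ∃ i, s(x, y) = s(f i, f (i + 1)) := fun x y h => by
    simpa only [Sym2.eq_iff] using (hf x y).mp h
  obtain ⟨i, hi⟩ := edge a b hab
  obtain ⟨j, hj⟩ := edge c d hcd
  have hji : j ≠ i := by rintro rfl; exact hne (hi.trans hj.symm)
  have hmem {k : ZMod n} : f k ∈ f '' ZMod.arc (i + 1) j ↔ k ∈ ZMod.arc (i + 1) j :=
    f.injective.mem_set_image
  refine ⟨f '' ZMod.arc (i + 1) j, ?_, fun x y hxy hcross => ?_⟩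
  · have hb : i + 1 ∈ ZMod.arc (i + 1) j := ZMod.left_mem_arc _ _
    have ha : i ∉ ZMod.arc (i + 1) j := ZMod.notMem_arc_of_ne hji
    rcases Sym2.eq_iff.mp hi with ⟨rfl, rfl⟩ | ⟨rfl, rfl⟩ <;>
      simp only [hmem] <;> tauto
  · obtain ⟨k, hk⟩ := edge x y hxy
    have hk' : k ∈ ZMod.arc (i + 1) j ↔ k + 1 ∉ ZMod.arc (i + 1) j := by
      rcases Sym2.eq_iff.mp hk with ⟨rfl, rfl⟩ | ⟨rfl, rfl⟩ <;>
        simp only [hmem] at hcross <;> tauto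
    rcases ZMod.eq_or_eq_of_mem_arc_iff hk' with rfl | rfl
    exacts [Or.inl (hk.trans hi.symm), Or.inr (hk.trans hj.symm)]

variable [DecidableEq V]

theorem deleteEdge_υ_le (X : FuzzyGraph V) (a b x y : V) :
    (X.deleteEdge a b).υ x y ≤ X.υ x y := by
  simp only [deleteEdge]
  split_ifs
  exacts [X.υ_nonneg x y, le_rfl]

theorem deleteEdge_υ_of_mk_eq (X : FuzzyGraph V) {a b x y : V} (h : s(x, y) = s(a, b)) :
    (X.deleteEdge a b).υ x y = 0 :=
  if_pos (Sym2.eq_iff.mp h)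

theorem conn_deleteEdge_le_of_cut (X : FuzzyGraph V) {a b c d : V} (S : Set V)
    (hab : a ∈ S ↔ b ∉ S)
    (hcut : ∀ x y, 0 < X.υ x y → (x ∈ S ↔ y ∉ S) → s(x, y) = s(a, b) ∨ s(x, y) = s(c, d)) :
    (X.deleteEdge a b).conn a b ≤ X.υ c d := by
  refine conn_le_of_crossing _ S hab (X.υ_nonneg c d) fun x y hxy => ?_
  rcases (X.υ_nonneg x y).eq_or_lt with h₀ | hpos
  · exact (X.deleteEdge_υ_le a b x y).trans (h₀ ▸ X.υ_nonneg c d)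
  rcases hcut x y hpos hxy with h | h
  · exact (X.deleteEdge_υ_of_mk_eq h).trans_le (X.υ_nonneg c d)
  · exact (X.deleteEdge_υ_le a b x y).trans (X.υ_eq_of_mk_eq h).le

end FuzzyGraph

theorem FuzzyGraph.betaStrong_le_alphaStrong_general {V : Type*} [DecidableEq V]
    (X : FuzzyGraph V) (hX : X.IsFuzzyCycle) {a b c d : V}
    (hab : X.BetaStrong a b) (hcd : X.AlphaStrong c d) :
    X.υ a b ≤ X.υ c d := by
  by_cases hne : s(a, b) = s(c, d)
  · exact (X.υ_eq_of_mk_eq hne).le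
  obtain ⟨S, hS, hcut⟩ := hX.1.exists_cut hab.1 hcd.1 hne
  calc X.υ a b = (X.deleteEdge a b).conn a b := hab.2
    _ ≤ X.υ c d := X.conn_deleteEdge_le_of_cut S hS hcut

/-- In a fuzzy cycle, the weight of a β-strong edge is at most the
weight of any α-strong edge. -/
theorem FuzzyGraph.betaStrong_le_alphaStrong {V : Type*} [Fintype V] [DecidableEq V]
    (X : FuzzyGraph V) (hX : X.IsFuzzyCycle) {a b c d : V}
    (hab : X.BetaStrong a b) (hcd : X.AlphaStrong c d) :
    X.υ a b ≤ X.υ c d :=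
  FuzzyGraph.betaStrong_le_alphaStrong_general X hX hab hcd
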